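/- For every integer k ≥ 0 the range of K₋ₖ equals the range of K₋ₖ ∘ W. In particular, the range of K₀ equals the range of P = K₀ ∘ W. -/

import Mathlib

open Complex MeasureTheory

/-- The `j`-th Laurent coefficient `K_j = (2πi)⁻¹ ∮_{|v|=r} v^(-j) R(v) dv` of the
resolvent function `R`. -/
noncomputable def laurentK {H : Type*} [NormedAddCommGroup H] [NormedSpace ℂ H]
    (R : ℂ → (H →L[ℂ] H)) (r : ℝ) (j : ℤ) : H →L[ℂ] H :=
  (2 * (Real.pi : ℂ) * Complex.I)⁻¹ • ∮ v in C(0, r), v ^ (-j) • R v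

/-!
For `0 < |w| < r` the resolvent identity `R(w) - R(u) = (u - w) R(w) W R(u)`, integrated over
`|u| = r`, gives `R(w) W K₀ = R(w) - g(w)`, where `g` is the Cauchy integral of `R` over `|u| = r`
and hence holomorphic on the open disc. Multiplying by `w^k` and integrating over a smaller circle
kills `g`, so `K₋ₖ W K₀ = K₋ₖ`. Thus `K₋ₖ x = (K₋ₖ W)(K₀ x)`, and the reverse inclusion of ranges
is trivial.
-/

open Metric Set

section CircleIntegral

theorem ContinuousLinearMap.circleIntegral_comp_comm {E F : Type*} [NormedAddCommGroup E]
    [NormedSpace ℂ E] [CompleteSpace E] [NormedAddCommGroup F] [NormedSpace ℂ F] [CompleteSpace F]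
    (L : E →L[ℂ] F) {f : ℂ → E} {c : ℂ} {ρ : ℝ} (hf : CircleIntegrable f c ρ) :
    (∮ z in C(c, ρ), L (f z)) = L (∮ z in C(c, ρ), f z) := by
  simp only [circleIntegral, ← L.intervalIntegral_comp_comm hf.out, L.map_smul]

variable {A : Type*} [NormedRing A] [NormedAlgebra ℂ A] [CompleteSpace A]
  {f : ℂ → A} {c : ℂ} {ρ : ℝ}

theorem circleIntegral_const_mul (hf : CircleIntegrable f c ρ) (a : A) :
    (∮ z in C(c, ρ), a * f z) = a * ∮ z in C(c, ρ), f z :=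
  (ContinuousLinearMap.mul ℂ A a).circleIntegral_comp_comm hf

theorem circleIntegral_mul_const (hf : CircleIntegrable f c ρ) (a : A) :
    (∮ z in C(c, ρ), f z * a) = (∮ z in C(c, ρ), f z) * a :=
  ((ContinuousLinearMap.mul ℂ A).flip a).circleIntegral_comp_comm hf

end CircleIntegral

noncomputable def cauchyTransform {E : Type*} [NormedAddCommGroup E] [NormedSpace ℂ E]
    (f : ℂ → E) (c : ℂ) (r : ℝ) (w : ℂ) : E :=
  (2 * Real.pi * I : ℂ)⁻¹ • ∮ z in C(c, r), (z - w)⁻¹ • f z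

theorem differentiableOn_cauchyTransform {E : Type*} [NormedAddCommGroup E] [NormedSpace ℂ E]
    [CompleteSpace E] {f : ℂ → E} {c : ℂ} {r : ℝ} (hr : 0 < r) (hf : CircleIntegrable f c r) :
    DifferentiableOn ℂ (cauchyTransform f c r) (ball c r) := by
  lift r to NNReal using hr.le
  have := (hasFPowerSeriesOn_cauchy_integral hf (by exact_mod_cast hr)).differentiableOn
  rwa [Metric.eball_coe] at this

theorem sub_eq_mul_sub_mul_of_mul_eq_one {R : Type*} [Ring R] {a a' b b' : R}
    (ha : a' * a = 1) (hb : b * b' = 1) : a' - b' = a' * (b - a) * b' := by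
  rw [mul_sub, sub_mul, mul_assoc, hb, ha, mul_one, one_mul]

theorem DifferentiableOn.of_mul_eq_one {𝕜 E A : Type*} [NontriviallyNormedField 𝕜]
    [NormedAddCommGroup E] [NormedSpace 𝕜 E] [NormedRing A] [HasSummableGeomSeries A]
    [NormedAlgebra 𝕜 A] {T R : E → A} {s : Set E} (hT : DifferentiableOn 𝕜 T s)
    (hR : ∀ x ∈ s, T x * R x = 1 ∧ R x * T x = 1) : DifferentiableOn 𝕜 R s := by
  let u (x : s) : Aˣ := ⟨T x, R x, (hR x x.2).1, (hR x x.2).2⟩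
  refine (hT.inverse fun x hx => (u ⟨x, hx⟩).isUnit).congr fun x hx => ?_
  exact (Ring.inverse_unit (u ⟨x, hx⟩)).symm

section Pencil

variable {A : Type*} [NormedRing A] [NormedAlgebra ℂ A]

def IsPencilInverse (T₀ W : A) (R : ℂ → A) (r : ℝ) : Prop :=
  ∀ v : ℂ, v ≠ 0 → ‖v‖ ≤ r → (T₀ + v • W) * R v = 1 ∧ R v * (T₀ + v • W) = 1

variable {T₀ W : A} {R : ℂ → A} {r : ℝ}

namespace IsPencilInverse

theorem sub_eq_smul_mul (hR : IsPencilInverse T₀ W R r) {u v : ℂ} (hv : v ≠ 0) (hvr : ‖v‖ ≤ r)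
    (hu : u ≠ 0) (hur : ‖u‖ ≤ r) : R v - R u = (u - v) • (R v * W * R u) := by
  rw [sub_eq_mul_sub_mul_of_mul_eq_one (hR v hv hvr).2 (hR u hu hur).1, add_sub_add_left_eq_sub,
    ← sub_smul, mul_smul_comm, smul_mul_assoc]

theorem differentiableOn [CompleteSpace A] (hR : IsPencilInverse T₀ W R r) :
    DifferentiableOn ℂ R (closedBall 0 r \ {0}) := by
  refine DifferentiableOn.of_mul_eq_one (T := fun v => T₀ + v • W) (by fun_prop) fun v hv => ?_
  simp only [mem_sdiff, mem_closedBall, dist_zero_right, mem_singleton_iff] at hv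
  exact hR v hv.2 hv.1

end IsPencilInverse

end Pencil

section Laurent

variable {H : Type*} [NormedAddCommGroup H] [NormedSpace ℂ H]
  {R : ℂ → (H →L[ℂ] H)} {r : ℝ}

theorem laurentK_zero : laurentK R r 0 = (2 * Real.pi * I : ℂ)⁻¹ • ∮ v in C(0, r), R v := by
  simp [laurentK]

theorem laurentK_neg_natCast (n : ℕ) :
    laurentK R r (-n) = (2 * Real.pi * I : ℂ)⁻¹ • ∮ v in C(0, r), v ^ n • R v := by
  simp [laurentK]

theorem laurentK_eq_laurentK_of_le [CompleteSpace H]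
    (hR : DifferentiableOn ℂ R (closedBall 0 r \ {0})) {ρ : ℝ} (hρ : 0 < ρ) (hρr : ρ ≤ r)
    (j : ℤ) : laurentK R ρ j = laurentK R r j := by
  have hF : DifferentiableOn ℂ (fun v => v ^ (-j) • R v) (closedBall 0 r \ {0}) :=
    ((differentiableOn_zpow (-j) {0}ᶜ (Or.inl (by simp))).mono fun _ hv => hv.2).smul hR
  have hannulus : closedBall (0 : ℂ) r \ ball 0 ρ ⊆ closedBall 0 r \ {0} :=
    sdiff_subset_sdiff_right (singleton_subset_iff.2 (mem_ball_self hρ))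
  unfold laurentK
  rw [circleIntegral_eq_of_differentiable_on_annulus_off_countable hρ hρr countable_empty
    (hF.continuousOn.mono hannulus)]
  intro z hz
  have hopen : IsOpen (ball (0 : ℂ) r \ closedBall 0 ρ) := isOpen_ball.sdiff isClosed_closedBall
  refine hF.differentiableAt (Filter.mem_of_superset (hopen.mem_nhds hz.1) ?_)
  exact sdiff_subset_sdiff ball_subset_closedBall
    (singleton_subset_iff.2 (mem_closedBall_self hρ.le))

namespace IsPencilInverse

variable [CompleteSpace H] {T₀ W : H →L[ℂ] H}

theorem mul_mul_laurentK_zero (hR : IsPencilInverse T₀ W R r) {w : ℂ}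
    (hw : w ∈ ball (0 : ℂ) r) (hw0 : w ≠ 0) :
    R w * W * laurentK R r 0 = R w - cauchyTransform R 0 r w := by
  have hr : 0 < r := pos_of_mem_ball hw
  have hwr : ‖w‖ < r := by simpa using hw
  have hsphere : sphere (0 : ℂ) r ⊆ closedBall 0 r \ {0} := fun u hu =>
    ⟨sphere_subset_closedBall hu, ne_of_mem_sphere hu hr.ne'⟩
  have hRcont : ContinuousOn R (sphere 0 r) := hR.differentiableOn.continuousOn.mono hsphere
  have hsub : ∀ u ∈ sphere (0 : ℂ) r, u - w ≠ 0 := fun u hu h => by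
    rw [sub_eq_zero.1 h, mem_sphere_zero_iff_norm] at hu
    exact hwr.ne hu
  have hkernel : ContinuousOn (fun u : ℂ => (u - w)⁻¹) (sphere 0 r) :=
    (continuousOn_id.sub continuousOn_const).inv₀ hsub
  have hresolvent : ∀ u ∈ sphere (0 : ℂ) r,
      R w * W * R u = (u - w)⁻¹ • R w - (u - w)⁻¹ • R u := by
    intro u hu
    have hur : ‖u‖ ≤ r := (mem_sphere_zero_iff_norm.1 hu).le
    rw [← smul_sub, hR.sub_eq_smul_mul hw0 hwr.le (hsphere hu).2 hur, inv_smul_smul₀ (hsub u hu)]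
  rw [laurentK_zero, mul_smul_comm, ← circleIntegral_const_mul (hRcont.circleIntegrable hr.le),
    circleIntegral.integral_congr hr.le hresolvent,
    circleIntegral.integral_sub ((hkernel.fun_smul continuousOn_const).circleIntegrable hr.le)
      ((hkernel.fun_smul hRcont).circleIntegrable hr.le), circleIntegral.integral_smul_const,
    circleIntegral.integral_sub_inv_of_mem_ball hw, smul_sub, smul_smul,
    inv_mul_cancel₀ two_pi_I_ne_zero, one_smul]
  rfl

theorem laurentK_neg_mul_mul_laurentK_zero (hR : IsPencilInverse T₀ W R r) (hr : 0 < r)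
    (n : ℕ) : laurentK R r (-n) * W * laurentK R r 0 = laurentK R r (-n) := by
  obtain ⟨ρ, hρ, hρr⟩ := exists_between hr
  have hRcont : ContinuousOn R (closedBall 0 r \ {0}) := hR.differentiableOn.continuousOn
  have hsphere : sphere (0 : ℂ) ρ ⊆ closedBall 0 r \ {0} := fun v hv =>
    ⟨closedBall_subset_closedBall hρr.le (sphere_subset_closedBall hv), ne_of_mem_sphere hv hρ.ne'⟩
  have hFint : CircleIntegrable (fun v => v ^ n • R v) 0 ρ :=
    ((continuousOn_pow n).smul (hRcont.mono hsphere)).circleIntegrable hρ.le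
  have hg : DifferentiableOn ℂ (fun v => v ^ n • cauchyTransform R 0 r v) (ball 0 r) :=
    (differentiableOn_pow n).smul (differentiableOn_cauchyTransform hr
      ((hRcont.mono fun u hu => ⟨sphere_subset_closedBall hu, ne_of_mem_sphere hu hr.ne'⟩)
        |>.circleIntegrable hr.le))
  have hgint : CircleIntegrable (fun v => v ^ n • cauchyTransform R 0 r v) 0 ρ :=
    (hg.continuousOn.mono (sphere_subset_closedBall.trans (closedBall_subset_ball hρr)))
      |>.circleIntegrable hρ.le
  have hg_zero : (∮ v in C(0, ρ), v ^ n • cauchyTransform R 0 r v) = 0 :=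
    (hg.diffContOnCl_ball (closedBall_subset_ball hρr)).circleIntegral_eq_zero hρ.le
  have hresolvent : ∀ v ∈ sphere (0 : ℂ) ρ, v ^ n • R v * (W * laurentK R r 0) =
      v ^ n • R v - v ^ n • cauchyTransform R 0 r v := by
    intro v hv
    have hvr : v ∈ ball (0 : ℂ) r := sphere_subset_closedBall.trans (closedBall_subset_ball hρr) hv
    rw [smul_mul_assoc, ← mul_assoc, hR.mul_mul_laurentK_zero hvr (hsphere hv).2, smul_sub]
  -- `K₋ₙ` is computed on the inner circle `|v| = ρ`, so that `v ≠ u` in the resolvent identity.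
  rw [← laurentK_eq_laurentK_of_le hR.differentiableOn hρ hρr.le, laurentK_neg_natCast,
    mul_assoc, smul_mul_assoc, ← circleIntegral_mul_const hFint,
    circleIntegral.integral_congr hρ.le hresolvent, circleIntegral.integral_sub hFint hgint,
    hg_zero, sub_zero]

end IsPencilInverse

end Laurent

theorem ContinuousLinearMap.range_mul_eq_range_of_mul_mul_eq {R M : Type*} [Semiring R]
    [TopologicalSpace M] [AddCommMonoid M] [Module R M] {K W P : M →L[R] M}
    (h : K * W * P = K) : range ⇑(K * W) = range ⇑K := by
  refine (range_comp_subset_range ⇑W ⇑K).antisymm ?_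
  conv_lhs => rw [← h]
  exact range_comp_subset_range ⇑P ⇑(K * W)

/-- For every integer `k ≥ 0`, the range of `K₋ₖ` equals the range of
`K₋ₖ ∘ W`; in particular the range of `K₀` equals the range of `P = K₀ ∘ W`. -/
theorem range_laurentK_eq_range_laurentK_comp_perturbation
    {H : Type*} [NormedAddCommGroup H] [InnerProductSpace ℂ H] [CompleteSpace H]
    (N₀ W : H →L[ℂ] H) (z₀ : ℂ) (r : ℝ) (hr : 0 < r)
    (R : ℂ → (H →L[ℂ] H))
    (hR : ∀ v : ℂ, v ≠ 0 → ‖v‖ ≤ r →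
      (N₀ + v • W - z₀ • (1 : H →L[ℂ] H)) * R v = 1 ∧
      R v * (N₀ + v • W - z₀ • (1 : H →L[ℂ] H)) = 1) :
    (∀ k : ℤ, 0 ≤ k →
      Set.range ⇑(laurentK R r (-k)) = Set.range ⇑(laurentK R r (-k) * W)) ∧
    Set.range ⇑(laurentK R r 0) = Set.range ⇑(laurentK R r 0 * W) := by
  have hpencil : IsPencilInverse (N₀ - z₀ • 1) W R r := fun v hv hvr => by
    simpa only [sub_add_eq_add_sub] using hR v hv hvr
  have hrange : ∀ k : ℤ, 0 ≤ k →
      range ⇑(laurentK R r (-k)) = range ⇑(laurentK R r (-k) * W) := by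
    intro k hk
    lift k to ℕ using hk
    exact (ContinuousLinearMap.range_mul_eq_range_of_mul_mul_eq
      (hpencil.laurentK_neg_mul_mul_laurentK_zero hr k)).symm
  exact ⟨hrange, by simpa using hrange 0 le_rfl⟩
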